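/- arXiv:2602.15152 — 5 statements merged into one kernel-verified Lean document; each statement's English description precedes it below -/
import Mathlib

section
/- If ψ : ℝ → ℝ is a positive solution on an interval of the ODE -λ·ψ·ψ'' + (λ-1)·(ψ')² - λ²·ψ² + 2(λ-1)·P = 0 (with λ > 1 and P constant), then the quantity (2P + (ψ')² + λ²ψ²)·ψ^(2/λ - 2) is constant on that interval. -/
open Real

theorem hasDerivAt_bernoulli {lam P θ ψ''θ : ℝ} {ψ ψ' : ℝ → ℝ} (hlam : lam ≠ 0)
    (hψ : HasDerivAt ψ (ψ' θ) θ) (hψ' : HasDerivAt ψ' ψ''θ θ) (hψθ : ψ θ ≠ 0) :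
    HasDerivAt (fun t => (2 * P + (ψ' t) ^ 2 + lam ^ 2 * (ψ t) ^ 2) * ψ t ^ (2 / lam - 2))
      (-(2 / lam) * ψ' θ * (ψ θ ^ (2 / lam - 2) / ψ θ) *
        (-lam * ψ θ * ψ''θ + (lam - 1) * (ψ' θ) ^ 2 - lam ^ 2 * (ψ θ) ^ 2
          + 2 * (lam - 1) * P)) θ := by
  have hsum := ((hψ'.fun_pow 2).const_add (2 * P)).fun_add ((hψ.fun_pow 2).const_mul (lam ^ 2))
  refine (hsum.fun_mul (hψ.rpow_const (Or.inl hψθ))).congr_deriv ?_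
  rw [rpow_sub_one hψθ]
  field_simp
  ring

/-- If ψ is a positive solution of `-λψψ'' + (λ-1)(ψ')² - λ²ψ² + 2(λ-1)P = 0` on an
open interval (with λ > 1), then the Bernoulli quantity
`(2P + (ψ')² + λ²ψ²) ψ^(2/λ-2)` has zero derivative on that interval. -/
theorem stmt_1 (lam P : ℝ) (hlam : 1 < lam) (a b : ℝ)
    (ψ ψ' ψ'' : ℝ → ℝ)
    (hψ : ∀ θ ∈ Set.Ioo a b, HasDerivAt ψ (ψ' θ) θ)
    (hψ' : ∀ θ ∈ Set.Ioo a b, HasDerivAt ψ' (ψ'' θ) θ)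
    (hpos : ∀ θ ∈ Set.Ioo a b, 0 < ψ θ)
    (hODE : ∀ θ ∈ Set.Ioo a b,
      -lam * ψ θ * ψ'' θ + (lam - 1) * (ψ' θ) ^ 2 - lam ^ 2 * (ψ θ) ^ 2
        + 2 * (lam - 1) * P = 0) :
    ∀ θ ∈ Set.Ioo a b,
      deriv (fun t => (2 * P + (ψ' t) ^ 2 + lam ^ 2 * (ψ t) ^ 2)
        * ψ t ^ (2 / lam - 2)) θ = 0 := by
  intro θ hθ
  have hB := hasDerivAt_bernoulli (P := P) (zero_lt_one.trans hlam).ne' (hψ θ hθ) (hψ' θ hθ)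
    (hpos θ hθ).ne'
  rw [hB.deriv, hODE θ hθ, mul_zero]
end

section
/- For λ ∈ (1, 3/2), the integral ∫₀¹ (t^(1/2 - λ) - t^(-1/2))/(1 - t)^(3/2) dt converges and equals 2√π·Γ(λ)·tan(πλ)/Γ(λ - 1/2). -/
/-!
For `0 < b`, subtracting `1` from `t ^ (a - 1)` tames the singularity of `(1 - t) ^ (b - 2)`
at `t = 1`. Splitting `(t ^ (a - 1) - 1) (1 - t) ^ (b - 2)` as
`t ^ (a - 1) (1 - t) ^ (b - 1) - (1 - t ^ a) (1 - t) ^ (b - 2)` and integrating the second term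
by parts against `(1 - t) ^ (b - 1)` gives the integral `((1 - a - b) B(a, b) + 1) / (1 - b)`.
The integrand of the theorem is the difference of the cases `a = 3/2 - λ` and `a = 1/2` at
`b = 1/2`, so the integral is `(2λ - 2) B(3/2 - λ, 1/2)`; the reflection formula, applied at
`λ - 1` and `λ - 1/2`, turns this into `2 √π Γ(λ) tan(πλ) / Γ(λ - 1/2)`.
-/

open Real MeasureTheory Set Filter Topology ProbabilityTheory

lemma ofReal_rpow_mul_one_sub_rpow {a b t : ℝ} (ht : t ∈ Ioo 0 1) :
    ((t ^ (a - 1) * (1 - t) ^ (b - 1) : ℝ) : ℂ)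
      = (t : ℂ) ^ ((a : ℂ) - 1) * (1 - (t : ℂ)) ^ ((b : ℂ) - 1) := by
  rw [Complex.ofReal_mul, Complex.ofReal_cpow ht.1.le, Complex.ofReal_cpow (by linarith [ht.2])]
  push_cast
  rfl

lemma integrableOn_rpow_mul_one_sub_rpow {a b : ℝ} (ha : 0 < a) (hb : 0 < b) :
    IntegrableOn (fun t : ℝ => t ^ (a - 1) * (1 - t) ^ (b - 1)) (Ioo 0 1) := by
  have h := Complex.betaIntegral_convergent (u := a) (v := b) (by simpa) (by simpa)
  rw [intervalIntegrable_iff_integrableOn_Ioo_of_le zero_le_one] at h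
  have := (h.congr_fun (fun t ht => (ofReal_rpow_mul_one_sub_rpow ht).symm) measurableSet_Ioo).re
  simpa [IntegrableOn] using this

lemma betaIntegral_ofReal (a b : ℝ) :
    Complex.betaIntegral a b = ∫ t in Ioo (0 : ℝ) 1, t ^ (a - 1) * (1 - t) ^ (b - 1) := by
  rw [Complex.betaIntegral, intervalIntegral.integral_of_le zero_le_one,
    integral_Ioc_eq_integral_Ioo, ← integral_complex_ofReal]
  exact setIntegral_congr_fun measurableSet_Ioo fun t ht => (ofReal_rpow_mul_one_sub_rpow ht).symm

lemma integral_rpow_mul_one_sub_rpow {a b : ℝ} (ha : 0 < a) (hb : 0 < b) :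
    ∫ t in Ioo (0 : ℝ) 1, t ^ (a - 1) * (1 - t) ^ (b - 1) = beta a b := by
  rw [beta_eq_betaIntegralReal a b ha hb, betaIntegral_ofReal, Complex.ofReal_re]

lemma one_sub_rpow_mul_rpow_mem_Icc {s c t : ℝ} (hs : 0 < s) (hs1 : s ≤ 1)
    (ht : t ∈ Ioo 0 1) :
    (1 - t ^ s) * (1 - t) ^ c ∈ Icc 0 ((1 - t) ^ (c + 1)) := by
  have h1t : 0 < 1 - t := by linarith [ht.2]
  have hpow : 0 ≤ (1 - t) ^ c := (rpow_pos_of_pos h1t c).le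
  have hle : t ≤ t ^ s := by simpa using rpow_le_rpow_of_exponent_ge ht.1 ht.2.le hs1
  have hle1 : t ^ s ≤ 1 := rpow_le_one ht.1.le ht.2.le hs.le
  rw [rpow_add_one h1t.ne', mul_comm _ (1 - t)]
  exact ⟨mul_nonneg (by linarith) hpow, mul_le_mul_of_nonneg_right (by linarith) hpow⟩

lemma integrableOn_one_sub_rpow_mul_one_sub_rpow {s b : ℝ} (hs : 0 < s) (hs1 : s ≤ 1)
    (hb : 0 < b) : IntegrableOn (fun t : ℝ => (1 - t ^ s) * (1 - t) ^ (b - 2)) (Ioo 0 1) := by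
  have hdom : IntegrableOn (fun t : ℝ => t ^ (1 - 1 : ℝ) * (1 - t) ^ (b - 1)) (Ioo 0 1) :=
    integrableOn_rpow_mul_one_sub_rpow one_pos hb
  refine hdom.mono' (by fun_prop : Measurable _).aestronglyMeasurable
    (ae_restrict_of_forall_mem measurableSet_Ioo fun t ht => ?_)
  have h := one_sub_rpow_mul_rpow_mem_Icc (c := b - 2) hs hs1 ht
  rw [show b - 2 + 1 = b - 1 by ring] at h
  simpa [norm_of_nonneg h.1] using h.2

lemma integral_one_sub_rpow_mul_one_sub_rpow {s b : ℝ} (hs : 0 < s) (hs1 : s ≤ 1) (hb : 0 < b)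
    (hb1 : b ≠ 1) :
    ∫ t in Ioo (0 : ℝ) 1, (1 - t ^ s) * (1 - t) ^ (b - 2) = (s * beta s b - 1) / (1 - b) := by
  set F : ℝ → ℝ := fun t => (1 - t ^ s) * (1 - t) ^ (b - 1)
  set M : ℝ → ℝ := fun t => (1 - t ^ s) * (1 - t) ^ (b - 2)
  set B : ℝ → ℝ := fun t => t ^ (s - 1) * (1 - t) ^ (b - 1)
  have hM : IntegrableOn M (Ioo 0 1) := integrableOn_one_sub_rpow_mul_one_sub_rpow hs hs1 hb
  have hB : IntegrableOn B (Ioo 0 1) := integrableOn_rpow_mul_one_sub_rpow hs hb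
  have hderiv : ∀ t ∈ Ioo (0 : ℝ) 1, HasDerivAt F ((1 - b) * M t - s * B t) t := by
    intro t ht
    have h1t : 1 - t ≠ 0 := by linarith [ht.2]
    have hpow := ((hasDerivAt_rpow_const (p := s) (Or.inl ht.1.ne')).const_sub 1).mul
      ((hasDerivAt_rpow_const (p := b - 1) (Or.inl h1t)).comp t ((hasDerivAt_id t).const_sub 1))
    refine hpow.congr_deriv ?_
    simp only [M, B, Function.comp_apply, show b - 1 - 1 = b - 2 by ring]
    ring
  have hint : IntervalIntegrable (fun t => (1 - b) * M t - s * B t) volume 0 1 :=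
    (intervalIntegrable_iff_integrableOn_Ioo_of_le zero_le_one).2
      ((hM.const_mul _).sub (hB.const_mul _))
  have hF0 : Tendsto F (𝓝[>] 0) (𝓝 1) := by
    have hcont : ContinuousAt F 0 :=
      ((continuousAt_id.rpow_const (Or.inr hs.le)).const_sub 1).mul
        (ContinuousAt.rpow_const (by fun_prop) (Or.inl (by norm_num)))
    simpa [F, zero_rpow hs.ne'] using hcont.continuousWithinAt.tendsto
  have hF1 : Tendsto F (𝓝[<] 1) (𝓝 0) := by
    have hcont : ContinuousAt (fun t : ℝ => (1 - t) ^ b) 1 :=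
      ContinuousAt.rpow_const (by fun_prop) (Or.inr hb.le)
    have hlim : Tendsto (fun t : ℝ => (1 - t) ^ b) (𝓝[<] 1) (𝓝 0) := by
      simpa [zero_rpow hb.ne'] using hcont.continuousWithinAt.tendsto
    have hbound : ∀ᶠ t in 𝓝[<] 1, F t ∈ Icc 0 ((1 - t) ^ b) := by
      filter_upwards [Ioo_mem_nhdsLT zero_lt_one] with t ht
      simpa using one_sub_rpow_mul_rpow_mem_Icc (c := b - 1) hs hs1 ht
    exact squeeze_zero' (hbound.mono fun _ h => h.1) (hbound.mono fun _ h => h.2) hlim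
  have key := intervalIntegral.integral_eq_sub_of_hasDerivAt_of_tendsto zero_lt_one hderiv hint
    hF0 hF1
  rw [intervalIntegral.integral_of_le zero_le_one, integral_Ioc_eq_integral_Ioo,
    integral_sub (hM.const_mul _) (hB.const_mul _), integral_const_mul, integral_const_mul,
    integral_rpow_mul_one_sub_rpow hs hb] at key
  rw [eq_div_iff (sub_ne_zero.2 hb1.symm)]
  linarith

lemma rpow_sub_one_sub_one_mul_eq {a b t : ℝ} (ht : t ∈ Ioo 0 1) :
    (t ^ (a - 1) - 1) * (1 - t) ^ (b - 2)
      = t ^ (a - 1) * (1 - t) ^ (b - 1) - (1 - t ^ a) * (1 - t) ^ (b - 2) := by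
  have h1t : 1 - t ≠ 0 := by linarith [ht.2]
  rw [show b - 1 = b - 2 + 1 by ring, rpow_add_one h1t,
    show a = a - 1 + 1 by ring, rpow_add_one ht.1.ne', add_sub_cancel_right]
  ring

lemma integrableOn_rpow_sub_one_sub_one_mul {a b : ℝ} (ha : 0 < a) (ha1 : a ≤ 1) (hb : 0 < b) :
    IntegrableOn (fun t : ℝ => (t ^ (a - 1) - 1) * (1 - t) ^ (b - 2)) (Ioo 0 1) :=
  ((integrableOn_rpow_mul_one_sub_rpow ha hb).sub
    (integrableOn_one_sub_rpow_mul_one_sub_rpow ha ha1 hb)).congr_fun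
    (fun _ ht => (rpow_sub_one_sub_one_mul_eq ht).symm) measurableSet_Ioo

lemma integral_rpow_sub_one_sub_one_mul {a b : ℝ} (ha : 0 < a) (ha1 : a ≤ 1) (hb : 0 < b)
    (hb1 : b ≠ 1) :
    ∫ t in Ioo (0 : ℝ) 1, (t ^ (a - 1) - 1) * (1 - t) ^ (b - 2)
      = ((1 - a - b) * beta a b + 1) / (1 - b) := by
  rw [setIntegral_congr_fun measurableSet_Ioo fun _ ht => rpow_sub_one_sub_one_mul_eq ht,
    integral_sub (integrableOn_rpow_mul_one_sub_rpow ha hb)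
      (integrableOn_one_sub_rpow_mul_one_sub_rpow ha ha1 hb),
    integral_rpow_mul_one_sub_rpow ha hb, integral_one_sub_rpow_mul_one_sub_rpow ha ha1 hb hb1]
  field_simp [sub_ne_zero.2 hb1.symm]
  ring

lemma Gamma_one_half_sub_div_Gamma_one_sub {s : ℝ} (hs : Gamma s ≠ 0)
    (hs' : Gamma (s + 1 / 2) ≠ 0) :
    Gamma (1 / 2 - s) / Gamma (1 - s) = tan (π * s) * Gamma s / Gamma (s + 1 / 2) := by
  have hhalf : Gamma (1 / 2 - s) = π / cos (π * s) / Gamma (s + 1 / 2) := by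
    rw [eq_div_iff hs', mul_comm, ← sin_add_pi_div_two,
      show π * s + π / 2 = π * (s + 1 / 2) by ring,
      ← Gamma_mul_Gamma_one_sub, show 1 - (s + 1 / 2) = 1 / 2 - s by ring]
  have hone : Gamma (1 - s) = π / sin (π * s) / Gamma s := by
    rw [eq_div_iff hs, mul_comm, Gamma_mul_Gamma_one_sub]
  rw [hhalf, hone, tan_eq_sin_div_cos]
  rcases eq_or_ne (cos (π * s)) 0 with hc | hc
  · simp [hc]
  rcases eq_or_ne (sin (π * s)) 0 with hsin | hsin
  · simp [hsin]
  field_simp [pi_ne_zero]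

/-- For λ ∈ (1, 3/2), `∫₀¹ (t^(1/2-λ) - t^(-1/2))/(1-t)^(3/2) dt` converges and equals
`2√π Γ(λ) tan(πλ)/Γ(λ-1/2)`. -/
theorem stmt_9 (lam : ℝ) (hlam : 1 < lam) (hlam2 : lam < 3 / 2) :
    IntegrableOn
      (fun t : ℝ => (t ^ (1 / 2 - lam) - t ^ (-(1:ℝ) / 2)) / (1 - t) ^ ((3:ℝ) / 2))
      (Set.Ioo 0 1) ∧
    ∫ t in Set.Ioo (0:ℝ) 1,
        (t ^ (1 / 2 - lam) - t ^ (-(1:ℝ) / 2)) / (1 - t) ^ ((3:ℝ) / 2)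
      = 2 * Real.sqrt π * Real.Gamma lam * Real.tan (π * lam)
          / Real.Gamma (lam - 1 / 2) := by
  have hq : 0 < 3 / 2 - lam := by linarith
  have hq1 : 3 / 2 - lam ≤ 1 := by linarith
  have hsplit : EqOn
      (fun t : ℝ => (t ^ (3 / 2 - lam - 1) - 1) * (1 - t) ^ ((1 : ℝ) / 2 - 2)
        - (t ^ ((1 : ℝ) / 2 - 1) - 1) * (1 - t) ^ ((1 : ℝ) / 2 - 2))
      (fun t : ℝ => (t ^ (1 / 2 - lam) - t ^ (-(1:ℝ) / 2)) / (1 - t) ^ ((3:ℝ) / 2))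
      (Ioo 0 1) := by
    intro t ht
    dsimp only
    rw [show (1 : ℝ) / 2 - 2 = -(3 / 2) by norm_num, rpow_neg (by linarith [ht.2]),
      show 3 / 2 - lam - 1 = 1 / 2 - lam by ring, show (1 : ℝ) / 2 - 1 = -1 / 2 by norm_num]
    ring
  have hNq := integrableOn_rpow_sub_one_sub_one_mul hq hq1 one_half_pos
  have hNhalf := integrableOn_rpow_sub_one_sub_one_mul one_half_pos (by norm_num) one_half_pos
  refine ⟨(hNq.sub hNhalf).congr_fun hsplit measurableSet_Ioo, ?_⟩
  have hGamma : Gamma (3 / 2 - lam) / Gamma (3 / 2 - lam + 1 / 2)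
      = tan (π * lam) * Gamma (lam - 1) / Gamma (lam - 1 / 2) := by
    have h := Gamma_one_half_sub_div_Gamma_one_sub
      (Gamma_pos_of_pos (by linarith : 0 < lam - 1)).ne'
      (Gamma_pos_of_pos (by linarith : 0 < lam - 1 + 1 / 2)).ne'
    rwa [show π * (lam - 1) = π * lam - π by ring, tan_sub_pi,
      show 1 / 2 - (lam - 1) = 3 / 2 - lam by ring,
      show 1 - (lam - 1) = 3 / 2 - lam + 1 / 2 by ring,
      show lam - 1 + 1 / 2 = lam - 1 / 2 by ring] at h
  have hlam1 : Gamma lam = (lam - 1) * Gamma (lam - 1) := by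
    simpa using Gamma_add_one (by linarith : lam - 1 ≠ 0)
  rw [← setIntegral_congr_fun measurableSet_Ioo hsplit, integral_sub hNq hNhalf,
    integral_rpow_sub_one_sub_one_mul hq hq1 one_half_pos (by norm_num),
    integral_rpow_sub_one_sub_one_mul one_half_pos (by norm_num) one_half_pos (by norm_num),
    beta, Gamma_one_half_eq, mul_div_right_comm, hGamma, hlam1]
  ring
end

section
/- For λ ∈ (1,2) and P < 0, let x₋ > 0 solve λ²x₋² + x₋^(2-2/λ) = -2P, and define T₋(P) = ∫₀¹ 2(λ²(1-s²) + x₋^(-2/λ)(1 - s^(2-2/λ)))^(-1/2) ds. Then T₋(P) < π/λ for all P < 0 and T₋(P) → 0 as P → 0⁻. -/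
open Real MeasureTheory
set_option maxHeartbeats 1000000

lemma sin_image : Real.sin '' Set.Ioo 0 (π/2) = Set.Ioo (0:ℝ) 1 := by
  have hpi := Real.pi_pos
  ext y
  constructor
  · rintro ⟨θ, ⟨h0, h1⟩, rfl⟩
    refine ⟨Real.sin_pos_of_pos_of_lt_pi h0 (by linarith), ?_⟩
    have hm : Real.sin θ < Real.sin (π/2) :=
      Real.strictMonoOn_sin ⟨by linarith, by linarith⟩ ⟨by linarith, le_refl _⟩ h1
    simpa using hm
  · rintro ⟨h0, h1⟩
    exact ⟨Real.arcsin y, ⟨Real.arcsin_pos.2 h0, Real.arcsin_lt_pi_div_two.2 h1⟩,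
      Real.sin_arcsin (by linarith) (by linarith)⟩

lemma arcsin_int :
    IntegrableOn (fun s : ℝ => 1 / Real.sqrt (1 - s ^ 2)) (Set.Ioo 0 1) volume ∧
    ∫ s in Set.Ioo (0:ℝ) 1, 1 / Real.sqrt (1 - s ^ 2) = π / 2 := by
  have hpi := Real.pi_pos
  have hs : MeasurableSet (Set.Ioo (0:ℝ) (π/2)) := measurableSet_Ioo
  have hderiv : ∀ θ ∈ Set.Ioo (0:ℝ) (π/2),
      HasDerivWithinAt Real.sin (Real.cos θ) (Set.Ioo 0 (π/2)) θ :=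
    fun θ _ => (Real.hasDerivAt_sin θ).hasDerivWithinAt
  have hinj : Set.InjOn Real.sin (Set.Ioo 0 (π/2)) := by
    apply Real.injOn_sin.mono
    rintro θ ⟨h0, h1⟩
    exact ⟨by linarith, h1.le⟩
  have hcong : ∀ θ ∈ Set.Ioo (0:ℝ) (π/2),
      |Real.cos θ| • (1 / Real.sqrt (1 - (Real.sin θ) ^ 2)) = 1 := by
    rintro θ ⟨h0, h1⟩
    have hc : 0 < Real.cos θ := Real.cos_pos_of_mem_Ioo ⟨by linarith, h1⟩
    have h2 : 1 - Real.sin θ ^ 2 = Real.cos θ ^ 2 := by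
      have := Real.sin_sq_add_cos_sq θ; linarith
    rw [h2, Real.sqrt_sq hc.le, abs_of_pos hc, smul_eq_mul]
    field_simp
  constructor
  · rw [← sin_image]
    rw [integrableOn_image_iff_integrableOn_abs_deriv_smul hs hderiv hinj]
    exact (integrableOn_const measure_Ioo_lt_top.ne).congr_fun
      (fun θ hθ => (hcong θ hθ).symm) hs
  · rw [← sin_image,
      integral_image_eq_integral_abs_deriv_smul hs hderiv hinj]
    rw [setIntegral_congr_fun hs hcong]
    simp [Real.volume_Ioo]
    positivity

lemma main_bound (lam : ℝ) (hlam : 1 < lam) (hlam2 : lam < 2) (c : ℝ) (hc : 0 < c) :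
    (0:ℝ) ≤ (∫ s in Set.Ioo (0:ℝ) 1,
        2 / Real.sqrt (lam ^ 2 * (1 - s ^ 2) + c * (1 - s ^ (2 - 2 / lam)))) ∧
    (∫ s in Set.Ioo (0:ℝ) 1,
        2 / Real.sqrt (lam ^ 2 * (1 - s ^ 2) + c * (1 - s ^ (2 - 2 / lam))))
      ≤ π / Real.sqrt (lam ^ 2 + ((2 - 2 / lam) / 2) * c) := by
  have hlam0 : (0:ℝ) < lam := by linarith
  set a : ℝ := 2 - 2 / lam with ha_def
  have ha0 : 0 < a := by
    have : 2 / lam < 2 := by rw [div_lt_iff₀ hlam0]; nlinarith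
    simp only [ha_def]; linarith
  have ha1 : a < 1 := by
    have : 1 < 2 / lam := by rw [lt_div_iff₀ hlam0]; nlinarith
    simp only [ha_def]; linarith
  set K : ℝ := lam ^ 2 + (a / 2) * c with hK_def
  have hK1 : lam ^ 2 < K := by
    have : 0 < (a / 2) * c := by positivity
    simp only [hK_def]; linarith
  have hK0 : 0 < K := by nlinarith
  set f : ℝ → ℝ := fun s => 2 / Real.sqrt (lam ^ 2 * (1 - s ^ 2) + c * (1 - s ^ a)) with hf_def
  set g : ℝ → ℝ := fun s => (2 / Real.sqrt K) * (1 / Real.sqrt (1 - s ^ 2)) with hg_def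
  have hf0 : ∀ s, 0 ≤ f s := fun s => by simp only [hf_def]; positivity
  clear_value a K f g
  have hpt : ∀ s ∈ Set.Ioo (0:ℝ) 1, f s ≤ g s := by
    rintro s ⟨hs0, hs1⟩
    have hsa : s ^ a ≤ 1 + a * (s - 1) := by
      have h := rpow_one_add_le_one_add_mul_self (s := s - 1) (by linarith) ha0.le ha1.le
      rwa [show (1:ℝ) + (s - 1) = s by ring] at h
    have h2 : (a / 2) * (1 - s ^ 2) ≤ 1 - s ^ a := by
      nlinarith [hsa, mul_nonneg (mul_nonneg ha0.le (by linarith : (0:ℝ) ≤ 1 - s))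
        (by linarith : (0:ℝ) ≤ 1 - s)]
    have hD : K * (1 - s ^ 2) ≤ lam ^ 2 * (1 - s ^ 2) + c * (1 - s ^ a) := by
      have := mul_le_mul_of_nonneg_left h2 hc.le
      simp only [hK_def]; nlinarith
    have hs2 : 0 < 1 - s ^ 2 := by nlinarith
    have hpos : 0 < K * (1 - s ^ 2) := mul_pos hK0 hs2
    have hstep : f s ≤ 2 / Real.sqrt (K * (1 - s ^ 2)) := by
      simp only [hf_def]
      gcongr
    have heq : 2 / Real.sqrt (K * (1 - s ^ 2)) = g s := by
      simp only [hg_def]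
      rw [Real.sqrt_mul hK0.le, div_mul_div_comm]
      norm_num
    rw [← heq]; exact hstep
  have hg : IntegrableOn g (Set.Ioo 0 1) volume := by
    rw [hg_def]; exact arcsin_int.1.const_mul _
  have hfm : AEStronglyMeasurable f (volume.restrict (Set.Ioo 0 1)) := by
    apply Measurable.aestronglyMeasurable
    simp only [hf_def]
    fun_prop
  have hfi : IntegrableOn f (Set.Ioo 0 1) volume := by
    apply hg.mono' hfm
    refine (ae_restrict_iff' measurableSet_Ioo).2 (ae_of_all _ fun s hs => ?_)
    rw [Real.norm_of_nonneg (hf0 s)]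
    exact hpt s hs
  have hint : ∫ s in Set.Ioo (0:ℝ) 1, f s ≤ ∫ s in Set.Ioo (0:ℝ) 1, g s :=
    setIntegral_mono_on hfi hg measurableSet_Ioo hpt
  have hgval : ∫ s in Set.Ioo (0:ℝ) 1, g s = π / Real.sqrt K := by
    simp only [hg_def]
    rw [MeasureTheory.integral_const_mul, arcsin_int.2]
    have hK' : Real.sqrt K ≠ 0 := ne_of_gt (Real.sqrt_pos.2 hK0)
    field_simp
  constructor
  · exact integral_nonneg fun s => hf0 s
  · calc (∫ s in Set.Ioo (0:ℝ) 1, f s) ≤ ∫ s in Set.Ioo (0:ℝ) 1, g s := hint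
      _ = π / Real.sqrt K := hgval

/-- For λ ∈ (1,2), with `x₋(P)` the positive root of `λ²x² + x^(2-2/λ) = -2P` and
`T₋(P) = ∫₀¹ 2(λ²(1-s²) + x₋^(-2/λ)(1-s^(2-2/λ)))^(-1/2) ds`, one has `T₋(P) < π/λ`
for all P < 0, and `T₋(P) → 0` as `P → 0⁻`. -/
theorem stmt_11 (lam : ℝ) (hlam : 1 < lam) (hlam2 : lam < 2)
    (x T : ℝ → ℝ)
    (hx : ∀ P < (0 : ℝ), 0 < x P ∧
      lam ^ 2 * (x P) ^ 2 + (x P) ^ (2 - 2 / lam) = -2 * P)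
    (hT : ∀ P < (0 : ℝ), T P = ∫ s in Set.Ioo (0:ℝ) 1,
      2 / Real.sqrt (lam ^ 2 * (1 - s ^ 2)
        + (x P) ^ (-2 / lam) * (1 - s ^ (2 - 2 / lam)))) :
    (∀ P < (0 : ℝ), T P < π / lam) ∧
    Filter.Tendsto T (nhdsWithin 0 (Set.Iio 0)) (nhds 0) := by
  have hlam0 : (0:ℝ) < lam := by linarith
  have ha0 : (0:ℝ) < 2 - 2 / lam := by
    have : 2 / lam < 2 := by rw [div_lt_iff₀ hlam0]; nlinarith
    linarith
  have key : ∀ P < (0:ℝ), 0 ≤ T P ∧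
      T P ≤ π / Real.sqrt (lam ^ 2 + ((2 - 2 / lam) / 2) * (x P) ^ (-2 / lam)) := by
    intro P hP
    have hc : 0 < (x P) ^ (-2 / lam) := Real.rpow_pos_of_pos (hx P hP).1 _
    have h := main_bound lam hlam hlam2 ((x P) ^ (-2 / lam)) hc
    rw [hT P hP]
    exact h
  constructor
  · intro P hP
    have hc : 0 < (x P) ^ (-2 / lam) := Real.rpow_pos_of_pos (hx P hP).1 _
    have h1 := (key P hP).2
    have hKlt : lam < Real.sqrt (lam ^ 2 + ((2 - 2 / lam) / 2) * (x P) ^ (-2 / lam)) := by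
      have h2 : lam ^ 2 < lam ^ 2 + ((2 - 2 / lam) / 2) * (x P) ^ (-2 / lam) := by
        have : 0 < ((2 - 2 / lam) / 2) * (x P) ^ (-2 / lam) := by positivity
        linarith
      calc lam = Real.sqrt (lam ^ 2) := by rw [Real.sqrt_sq hlam0.le]
        _ < _ := Real.sqrt_lt_sqrt (by positivity) h2
    have h3 : π / Real.sqrt (lam ^ 2 + ((2 - 2 / lam) / 2) * (x P) ^ (-2 / lam)) < π / lam :=
      div_lt_div_of_pos_left Real.pi_pos hlam0 hKlt
    linarith
  · -- the limit P → 0⁻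
    have hmem : ∀ᶠ P in nhdsWithin (0:ℝ) (Set.Iio 0), P < 0 :=
      eventually_mem_nhdsWithin
    -- x P → 0
    have hxb : ∀ P < (0:ℝ), x P ≤ (-2 * P) ^ (2 - 2 / lam)⁻¹ := by
      intro P hP
      obtain ⟨hx1, hx2⟩ := hx P hP
      have h3 : (x P) ^ (2 - 2 / lam) ≤ -2 * P := by
        have h4 : 0 ≤ lam ^ 2 * (x P) ^ 2 := by positivity
        linarith
      calc x P = ((x P) ^ (2 - 2 / lam)) ^ (2 - 2 / lam)⁻¹ :=
            (Real.rpow_rpow_inv hx1.le (ne_of_gt ha0)).symm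
        _ ≤ (-2 * P) ^ (2 - 2 / lam)⁻¹ :=
            Real.rpow_le_rpow (Real.rpow_nonneg hx1.le _) h3 (by positivity)
    have hub : Filter.Tendsto (fun P : ℝ => (-2 * P) ^ (2 - 2 / lam)⁻¹)
        (nhdsWithin (0:ℝ) (Set.Iio 0)) (nhds 0) := by
      have h4 : Filter.Tendsto (fun P : ℝ => -2 * P) (nhdsWithin (0:ℝ) (Set.Iio 0)) (nhds 0) := by
        have h4a : Continuous (fun P : ℝ => -2 * P) := by continuity
        have h4b := (h4a.tendsto 0).mono_left
          (nhdsWithin_le_nhds (s := Set.Iio (0:ℝ)))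
        simpa using h4b
      have h5 : ContinuousAt (fun t : ℝ => t ^ (2 - 2 / lam)⁻¹) 0 :=
        Real.continuousAt_rpow_const 0 _ (Or.inr (by positivity))
      have h6 := h5.tendsto.comp h4
      rwa [Real.zero_rpow (by positivity)] at h6
    have hx0 : Filter.Tendsto x (nhdsWithin (0:ℝ) (Set.Iio 0)) (nhds 0) := by
      apply tendsto_of_tendsto_of_tendsto_of_le_of_le' tendsto_const_nhds hub
      · exact hmem.mono fun P hP => (hx P hP).1.le
      · exact hmem.mono fun P hP => hxb P hP
    have hx0' : Filter.Tendsto x (nhdsWithin (0:ℝ) (Set.Iio 0)) (nhdsWithin 0 (Set.Ioi 0)) := by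
      rw [tendsto_nhdsWithin_iff]
      exact ⟨hx0, hmem.mono fun P hP => (hx P hP).1⟩
    -- (x P) ^ (-2/lam) → ∞
    have hcinf : Filter.Tendsto (fun P => (x P) ^ (-2 / lam))
        (nhdsWithin (0:ℝ) (Set.Iio 0)) Filter.atTop := by
      have h6 : Filter.Tendsto (fun t : ℝ => t ^ (2 / lam))
          (nhdsWithin (0:ℝ) (Set.Ioi 0)) (nhdsWithin 0 (Set.Ioi 0)) := by
        rw [tendsto_nhdsWithin_iff]
        constructor
        · have h7 : ContinuousAt (fun t : ℝ => t ^ (2 / lam)) 0 :=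
            Real.continuousAt_rpow_const 0 _ (Or.inr (by positivity))
          have h8 := h7.tendsto.mono_left (nhdsWithin_le_nhds (s := Set.Ioi (0:ℝ)))
          rwa [Real.zero_rpow (by positivity)] at h8
        · exact eventually_mem_nhdsWithin.mono fun t ht =>
            Real.rpow_pos_of_pos ht _
      have h9 := tendsto_inv_nhdsGT_zero.comp (h6.comp hx0')
      apply h9.congr'
      filter_upwards [hmem] with P hP
      have hx1 := (hx P hP).1
      simp only [Function.comp_apply]
      rw [show -2 / lam = -(2 / lam) by ring, Real.rpow_neg hx1.le]
    -- the upper bound tends to 0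
    have hB : Filter.Tendsto
        (fun P => π / Real.sqrt (lam ^ 2 + ((2 - 2 / lam) / 2) * (x P) ^ (-2 / lam)))
        (nhdsWithin (0:ℝ) (Set.Iio 0)) (nhds 0) := by
      have h10 : Filter.Tendsto
          (fun P => lam ^ 2 + ((2 - 2 / lam) / 2) * (x P) ^ (-2 / lam))
          (nhdsWithin (0:ℝ) (Set.Iio 0)) Filter.atTop :=
        Filter.tendsto_atTop_add_const_left _ _
          (hcinf.const_mul_atTop (by positivity))
      have hsqrt : Filter.Tendsto Real.sqrt Filter.atTop Filter.atTop :=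
        (tendsto_rpow_atTop (by norm_num : (0:ℝ) < 1/2)).congr
          fun t => (Real.sqrt_eq_rpow t).symm
      exact Filter.Tendsto.div_atTop tendsto_const_nhds (hsqrt.comp h10)
    apply tendsto_of_tendsto_of_tendsto_of_le_of_le' tendsto_const_nhds hB
    · exact hmem.mono fun P hP => (key P hP).1
    · exact hmem.mono fun P hP => (key P hP).2
end

section
/- For λ ∈ (1,2) and P < 0, the period T₊(P) = ∫₀¹ 2(λ²(1-s²) - x₊^(-2/λ)(1 - s^(2-2/λ)))^(-1/2) ds (with x₊ the positive solution of λ²x² - x^(2-2/λ) = -2P) satisfies π/λ < T₊(P) < π. -/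
open Real MeasureTheory Set

lemma aux_meas : Measurable (fun s : ℝ => 1 / Real.sqrt (1 - s^2)) :=
  measurable_const.div ((measurable_const.sub (measurable_id.pow_const 2)).sqrt)

lemma aux_II : IntervalIntegrable (fun s : ℝ => 1 / Real.sqrt (1 - s^2)) volume 0 1 := by
  have h0 : IntervalIntegrable (fun s : ℝ => s ^ (-(1/2) : ℝ)) volume 0 1 :=
    intervalIntegral.intervalIntegrable_rpow' (by norm_num)
  have h1 : IntervalIntegrable (fun s : ℝ => (1 - s) ^ (-(1/2) : ℝ)) volume 0 1 := by
    simpa using (h0.comp_sub_left 1).symm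
  refine h1.mono_fun aux_meas.aestronglyMeasurable ?_
  have hne : ∀ᵐ s : ℝ ∂(volume.restrict (uIoc (0:ℝ) 1)), s ≠ 1 :=
    ae_restrict_of_ae (by
      rw [ae_iff]
      have h1 : (volume : Measure ℝ) {1} = 0 := Real.volume_singleton
      convert h1 using 2
      ext s; simp)
  filter_upwards [ae_restrict_mem measurableSet_uIoc, hne] with s hs hsne
  rw [uIoc_of_le (by norm_num : (0:ℝ) ≤ 1)] at hs
  obtain ⟨h0s, h1s⟩ := hs
  have h1s' : 0 < 1 - s := by cases lt_or_eq_of_le h1s with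
    | inl h => linarith
    | inr h => exact absurd h hsne
  have hle : (1 : ℝ) - s ≤ 1 - s^2 := by nlinarith
  rw [Real.norm_eq_abs, Real.norm_eq_abs]
  rw [abs_of_nonneg (by positivity), abs_of_nonneg (by positivity)]
  rw [Real.rpow_neg h1s'.le, ← Real.sqrt_eq_rpow, ← one_div]
  have h2 : Real.sqrt (1-s) ≤ Real.sqrt (1-s^2) := Real.sqrt_le_sqrt hle
  have hp : 0 < Real.sqrt (1-s) := Real.sqrt_pos.2 h1s'
  exact one_div_le_one_div_of_le hp h2

lemma aux_int : IntegrableOn (fun s : ℝ => 1 / Real.sqrt (1 - s^2)) (Set.Ioo 0 1) volume :=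
  ((intervalIntegrable_iff_integrableOn_Ioc_of_le (by norm_num)).1 aux_II).mono_set
    Set.Ioo_subset_Ioc_self

lemma aux_val : ∫ s in Set.Ioo (0:ℝ) 1, 1 / Real.sqrt (1 - s^2) = π / 2 := by
  rw [← integral_Ioc_eq_integral_Ioo, ← intervalIntegral.integral_of_le (by norm_num : (0:ℝ) ≤ 1)]
  have := intervalIntegral.integral_eq_sub_of_hasDeriv_right_of_le (f := Real.arcsin)
    (f' := fun s : ℝ => 1 / Real.sqrt (1 - s^2)) (by norm_num : (0:ℝ) ≤ 1)
    (continuous_arcsin.continuousOn)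
    (fun s hs => (Real.hasDerivAt_arcsin (by cases hs; intro h; linarith)
      (by cases hs; intro h; linarith)).hasDerivWithinAt) aux_II
  rw [this, Real.arcsin_one, Real.arcsin_zero, sub_zero]

/-- positivity of the measure of `Ioo 0 1`. -/
lemma aux_vol : 0 < (volume : Measure ℝ) (Set.Ioo 0 1) := by
  rw [Real.volume_Ioo]; norm_num

/-- Strict comparison of set integrals on `Ioo 0 1`. -/
lemma aux_lt {f g : ℝ → ℝ} (hf : IntegrableOn f (Set.Ioo 0 1) volume)
    (hg : IntegrableOn g (Set.Ioo 0 1) volume)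
    (hlt : ∀ s ∈ Set.Ioo (0:ℝ) 1, f s < g s) :
    (∫ s in Set.Ioo (0:ℝ) 1, f s) < ∫ s in Set.Ioo (0:ℝ) 1, g s := by
  have hsub : IntegrableOn (fun s => g s - f s) (Set.Ioo 0 1) volume := hg.sub hf
  have hpos : 0 < ∫ s in Set.Ioo (0:ℝ) 1, (g s - f s) := by
    rw [setIntegral_pos_iff_support_of_nonneg_ae ?_ hsub]
    · refine lt_of_lt_of_le aux_vol (measure_mono ?_)
      intro s hs
      exact ⟨by simpa using (sub_pos.2 (hlt s hs)).ne', hs⟩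
    · filter_upwards [ae_restrict_mem measurableSet_Ioo] with s hs
      exact sub_nonneg.2 (hlt s hs).le
  have := integral_sub hg hf
  linarith [this ▸ hpos]

section Key
variable {lam c : ℝ}

-- pointwise facts about the denominator
lemma denom_facts (hlam : 1 < lam) (hlam2 : lam < 2) (hc0 : 0 < c) (hc : c < lam^2)
    {s : ℝ} (hs : s ∈ Set.Ioo (0:ℝ) 1) :
    0 < lam ^ 2 * (1 - s ^ 2) - c * (1 - s ^ (2 - 2 / lam)) ∧
    lam ^ 2 * (1 - s ^ 2) - c * (1 - s ^ (2 - 2 / lam)) < lam ^ 2 * (1 - s ^ 2) := by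
  obtain ⟨hs0, hs1⟩ := hs
  have hlam0 : (0:ℝ) < lam := by linarith
  have hb0 : 0 < 2 - 2 / lam := by
    have : 2 / lam < 2 := by rw [div_lt_iff₀ hlam0]; nlinarith
    linarith
  have hpow1 : s ^ (2 - 2 / lam) < 1 := Real.rpow_lt_one hs0.le hs1 hb0
  have hpow2 : s ^ (2:ℝ) < s ^ (2 - 2 / lam) :=
    Real.rpow_lt_rpow_of_exponent_gt hs0 hs1 (by linarith [div_pos (by norm_num : (0:ℝ)<2) hlam0])
  rw [show s ^ (2:ℝ) = s ^ 2 by rw [← Real.rpow_natCast s 2]; norm_num] at hpow2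
  have hpow0 : 0 < s ^ (2 - 2/lam) := Real.rpow_pos_of_pos hs0 _
  constructor
  · nlinarith
  · nlinarith

lemma key (hlam : 1 < lam) (hlam2 : lam < 2) (hc0 : 0 < c) (hc : c < lam^2) :
    π / lam < (∫ s in Set.Ioo (0:ℝ) 1,
        2 / Real.sqrt (lam ^ 2 * (1 - s ^ 2) - c * (1 - s ^ (2 - 2 / lam)))) ∧
      (∫ s in Set.Ioo (0:ℝ) 1,
        2 / Real.sqrt (lam ^ 2 * (1 - s ^ 2) - c * (1 - s ^ (2 - 2 / lam)))) < π := by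
  have hlam0 : (0:ℝ) < lam := by linarith
  set f : ℝ → ℝ := fun s => 2 / Real.sqrt (lam ^ 2 * (1 - s ^ 2) - c * (1 - s ^ (2 - 2 / lam)))
    with hf_def
  -- continuity of f on Ioo
  have hD_cont : ContinuousOn
      (fun s : ℝ => lam ^ 2 * (1 - s ^ 2) - c * (1 - s ^ (2 - 2 / lam))) (Set.Ioo 0 1) := by
    apply ContinuousOn.sub
    · exact (continuous_const.mul (continuous_const.sub (continuous_pow 2))).continuousOn
    · exact continuousOn_const.mul (continuousOn_const.sub
        (fun s hs => (Real.continuousAt_rpow_const s _ (Or.inl (ne_of_gt hs.1))).continuousWithinAt))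
  have hf_cont : ContinuousOn f (Set.Ioo 0 1) := by
    apply continuousOn_const.div (hD_cont.sqrt)
    intro s hs
    exact (Real.sqrt_pos.2 (denom_facts hlam hlam2 hc0 hc hs).1).ne'
  -- integrability of f
  have hfpos : ∀ s ∈ Set.Ioo (0:ℝ) 1, 0 < f s := fun s hs => by
    have := (denom_facts hlam hlam2 hc0 hc hs).1
    positivity
  have hf_int : IntegrableOn f (Set.Ioo 0 1) volume := by
    apply Integrable.mono' ((aux_int.const_mul (2 / Real.sqrt (lam^2 - c))) :
      IntegrableOn (fun s : ℝ => (2 / Real.sqrt (lam^2 - c)) * (1 / Real.sqrt (1 - s^2))) _ _)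
      (hf_cont.aestronglyMeasurable measurableSet_Ioo)
    filter_upwards [ae_restrict_mem measurableSet_Ioo] with s hs
    obtain ⟨hs0, hs1⟩ := hs
    have hb0 : 0 < 2 - 2 / lam := by
      have : 2 / lam < 2 := by rw [div_lt_iff₀ hlam0]; nlinarith
      linarith
    have hpow2 : s ^ (2:ℝ) < s ^ (2 - 2 / lam) :=
      Real.rpow_lt_rpow_of_exponent_gt hs0 hs1 (by linarith [div_pos (by norm_num : (0:ℝ)<2) hlam0])
    rw [show s ^ (2:ℝ) = s ^ 2 by rw [← Real.rpow_natCast s 2]; norm_num] at hpow2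
    have hDge : (lam^2 - c) * (1 - s^2) ≤ lam ^ 2 * (1 - s ^ 2) - c * (1 - s ^ (2 - 2 / lam)) := by
      nlinarith
    have hs2 : (0:ℝ) < 1 - s^2 := by nlinarith
    have h1 : Real.sqrt ((lam^2 - c) * (1 - s^2))
        ≤ Real.sqrt (lam ^ 2 * (1 - s ^ 2) - c * (1 - s ^ (2 - 2 / lam))) :=
      Real.sqrt_le_sqrt hDge
    have h2 : 0 < Real.sqrt ((lam^2 - c) * (1 - s^2)) := Real.sqrt_pos.2 (mul_pos (by linarith) hs2)
    rw [Real.norm_eq_abs, abs_of_nonneg (hfpos s ⟨hs0, hs1⟩).le]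
    calc f s ≤ 2 / Real.sqrt ((lam^2 - c) * (1 - s^2)) := by
          exact div_le_div_of_nonneg_left (by norm_num) h2 h1
      _ = (2 / Real.sqrt (lam^2 - c)) * (1 / Real.sqrt (1 - s^2)) := by
          rw [Real.sqrt_mul (by nlinarith : (0:ℝ) ≤ lam^2 - c), div_mul_div_comm, mul_one]
  constructor
  · -- lower bound
    have hval : ∫ s in Set.Ioo (0:ℝ) 1, (2/lam) * (1 / Real.sqrt (1 - s^2)) = π / lam := by
      rw [integral_const_mul, aux_val]; field_simp
    rw [← hval]
    apply aux_lt (aux_int.const_mul (2/lam)) hf_int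
    intro s hs
    obtain ⟨h1, h2⟩ := denom_facts hlam hlam2 hc0 hc hs
    have hs2 : (0:ℝ) < 1 - s^2 := by obtain ⟨a, b⟩ := hs; nlinarith
    have hsq : Real.sqrt (lam ^ 2 * (1 - s ^ 2)) = lam * Real.sqrt (1 - s^2) := by
      rw [show lam^2 * (1-s^2) = lam^2 * (1-s^2) from rfl, Real.sqrt_mul (by positivity),
        Real.sqrt_sq hlam0.le]
    have h3 : Real.sqrt (lam ^ 2 * (1 - s ^ 2) - c * (1 - s ^ (2 - 2 / lam)))
        < lam * Real.sqrt (1 - s^2) := by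
      rw [← hsq]; exact Real.sqrt_lt_sqrt h1.le h2
    calc (2/lam) * (1 / Real.sqrt (1 - s^2)) = 2 / (lam * Real.sqrt (1 - s^2)) := by
          rw [div_mul_div_comm, mul_one]
      _ < f s := div_lt_div_of_pos_left (by norm_num)
          (Real.sqrt_pos.2 h1) h3
  · -- upper bound via the substitution s = z ^ lam
    have hmono : StrictMonoOn (fun z : ℝ => z ^ lam) (Set.Ioo 0 1) :=
      fun a ha b hb hab => Real.rpow_lt_rpow ha.1.le hab hlam0
    have hderiv : ∀ z ∈ Set.Ioo (0:ℝ) 1,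
        HasDerivWithinAt (fun z : ℝ => z ^ lam) (lam * z ^ (lam - 1)) (Set.Ioo 0 1) z :=
      fun z hz => (Real.hasDerivAt_rpow_const (Or.inl hz.1.ne')).hasDerivWithinAt
    have himg : (fun z : ℝ => z ^ lam) '' Set.Ioo 0 1 = Set.Ioo 0 1 := by
      ext y; constructor
      · rintro ⟨z, hz, rfl⟩
        exact ⟨Real.rpow_pos_of_pos hz.1 _, Real.rpow_lt_one hz.1.le hz.2 hlam0⟩
      · intro hy
        refine ⟨y ^ lam⁻¹, ⟨Real.rpow_pos_of_pos hy.1 _,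
          Real.rpow_lt_one hy.1.le hy.2 (by positivity)⟩, ?_⟩
        show (y ^ lam⁻¹) ^ lam = y
        rw [← Real.rpow_mul hy.1.le, inv_mul_cancel₀ hlam0.ne', Real.rpow_one]
    have hchg : (∫ s in Set.Ioo (0:ℝ) 1, f s)
        = ∫ z in Set.Ioo (0:ℝ) 1, |lam * z ^ (lam - 1)| • f (z ^ lam) := by
      conv_lhs => rw [← himg]
      exact integral_image_eq_integral_abs_deriv_smul measurableSet_Ioo hderiv hmono.injOn f
    set A : ℝ → ℝ := fun z => 1 - z^2 + (1 - c/lam^2) * (z ^ ((2:ℝ) - 2*lam) - 1) with hA_def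
    have hAgt : ∀ z ∈ Set.Ioo (0:ℝ) 1, 1 - z^2 < A z := by
      intro z hz
      have h1 : (1:ℝ) < z ^ ((2:ℝ) - 2*lam) :=
        (Real.one_lt_rpow_iff_of_pos hz.1).2 (Or.inr ⟨hz.2, by linarith⟩)
      have h2 : 0 < 1 - c/lam^2 := by
        have : c / lam^2 < 1 := (div_lt_one (by positivity)).2 hc
        linarith
      have := mul_pos h2 (by linarith : (0:ℝ) < z ^ ((2:ℝ) - 2*lam) - 1)
      simp only [hA_def]; nlinarith
    have hA_pos : ∀ z ∈ Set.Ioo (0:ℝ) 1, 0 < A z := by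
      intro z hz
      have := hAgt z hz
      obtain ⟨a, b⟩ := hz; nlinarith
    have heq : ∀ z ∈ Set.Ioo (0:ℝ) 1,
        |lam * z ^ (lam - 1)| • f (z ^ lam) = 2 / Real.sqrt (A z) := by
      intro z hz
      obtain ⟨hz0, hz1⟩ := hz
      have hu : 0 < z ^ (lam - 1) := Real.rpow_pos_of_pos hz0 _
      have hP : z ^ ((2:ℝ)*lam-2) * z ^ ((2:ℝ) - 2*lam) = 1 := by
        rw [← Real.rpow_add hz0]
        norm_num
      have hQ : (z ^ lam) ^ 2 = z ^ ((2:ℝ)*lam-2) * z ^ 2 := by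
        rw [← Real.rpow_natCast (z ^ lam) 2, ← Real.rpow_mul hz0.le,
          ← Real.rpow_natCast z 2, ← Real.rpow_add hz0]
        norm_num [mul_comm]
      have hR : (z ^ lam) ^ ((2:ℝ) - 2/lam) = z ^ ((2:ℝ)*lam-2) := by
        rw [← Real.rpow_mul hz0.le]
        congr 1
        field_simp
      have hS : (z ^ (lam-1)) ^ 2 = z ^ ((2:ℝ)*lam - 2) := by
        rw [← Real.rpow_natCast (z ^ (lam-1)) 2, ← Real.rpow_mul hz0.le]
        congr 1
        push_cast; ring
      have hcc : lam^2 * (1 - c/lam^2) = lam^2 - c := by field_simp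
      have hDeq : lam ^ 2 * (1 - (z ^ lam) ^ 2) - c * (1 - (z ^ lam) ^ ((2:ℝ) - 2/lam))
          = (lam * z ^ (lam - 1))^2 * A z := by
        rw [hQ, hR, mul_pow, hS, hA_def]
        linear_combination (-(lam^2 - c)) * hP
          + (-(z ^ ((2:ℝ) - 2*lam) - 1) * z ^ ((2:ℝ)*lam-2)) * hcc
      have hsq2 : Real.sqrt ((lam * z ^ (lam - 1))^2 * A z)
          = (lam * z ^ (lam - 1)) * Real.sqrt (A z) := by
        rw [Real.sqrt_mul (sq_nonneg _), Real.sqrt_sq (by positivity)]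
      have hAz := hA_pos z ⟨hz0, hz1⟩
      have hsA : 0 < Real.sqrt (A z) := Real.sqrt_pos.2 hAz
      show |lam * z ^ (lam - 1)| * (2 / Real.sqrt (lam ^ 2 * (1 - (z ^ lam) ^ 2)
        - c * (1 - (z ^ lam) ^ ((2:ℝ) - 2/lam)))) = 2 / Real.sqrt (A z)
      rw [hDeq, hsq2, abs_of_pos (by positivity)]
      field_simp
    rw [hchg, setIntegral_congr_fun measurableSet_Ioo heq]
    -- now compare 2/√(A z) with 2/√(1-z²)
    have hA_cont : ContinuousOn A (Set.Ioo 0 1) := by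
      apply ContinuousOn.add
      · exact (continuous_const.sub (continuous_pow 2)).continuousOn
      · exact continuousOn_const.mul (ContinuousOn.sub
          (fun z hz => (Real.continuousAt_rpow_const z _ (Or.inl (ne_of_gt hz.1))).continuousWithinAt)
          continuousOn_const)
    have hg_cont : ContinuousOn (fun z => 2 / Real.sqrt (A z)) (Set.Ioo 0 1) := by
      apply continuousOn_const.div hA_cont.sqrt
      intro z hz
      exact (Real.sqrt_pos.2 (hA_pos z hz)).ne'
    have hlt2 : ∀ z ∈ Set.Ioo (0:ℝ) 1,
        2 / Real.sqrt (A z) < 2 * (1 / Real.sqrt (1 - z^2)) := by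
      intro z hz
      have hz2 : (0:ℝ) < 1 - z^2 := by obtain ⟨a, b⟩ := hz; nlinarith
      have h1 : Real.sqrt (1 - z^2) < Real.sqrt (A z) := Real.sqrt_lt_sqrt hz2.le (hAgt z hz)
      rw [mul_one_div]
      exact div_lt_div_of_pos_left (by norm_num) (Real.sqrt_pos.2 hz2) h1
    have hg_int : IntegrableOn (fun z => 2 / Real.sqrt (A z)) (Set.Ioo 0 1) volume := by
      apply Integrable.mono' ((aux_int.const_mul 2) :
        IntegrableOn (fun z : ℝ => 2 * (1 / Real.sqrt (1 - z^2))) _ _)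
        (hg_cont.aestronglyMeasurable measurableSet_Ioo)
      filter_upwards [ae_restrict_mem measurableSet_Ioo] with z hz
      rw [Real.norm_eq_abs, abs_of_nonneg (by positivity)]
      exact (hlt2 z hz).le
    have hπ : ∫ z in Set.Ioo (0:ℝ) 1, 2 * (1 / Real.sqrt (1 - z^2)) = π := by
      rw [integral_const_mul, aux_val]; ring
    rw [← hπ]
    exact aux_lt hg_int (aux_int.const_mul 2) hlt2

end Key


/-- For λ ∈ (1,2) and P < 0, the period
`T₊(P) = ∫₀¹ 2(λ²(1-s²) - x₊^(-2/λ)(1-s^(2-2/λ)))^(-1/2) ds`, with `x₊` the positive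
root of `λ²x² - x^(2-2/λ) = -2P`, satisfies `π/λ < T₊(P) < π`. -/
theorem stmt_13 (lam : ℝ) (hlam : 1 < lam) (hlam2 : lam < 2)
    (x T : ℝ → ℝ)
    (hx : ∀ P < (0 : ℝ), 0 < x P ∧
      lam ^ 2 * (x P) ^ 2 - (x P) ^ (2 - 2 / lam) = -2 * P)
    (hT : ∀ P < (0 : ℝ), T P = ∫ s in Set.Ioo (0:ℝ) 1,
      2 / Real.sqrt (lam ^ 2 * (1 - s ^ 2)
        - (x P) ^ (-2 / lam) * (1 - s ^ (2 - 2 / lam)))) :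
    ∀ P < (0 : ℝ), π / lam < T P ∧ T P < π := by
  intro P hP
  obtain ⟨hx0, hxeq⟩ := hx P hP
  have hc0 : 0 < x P ^ (-2/lam) := Real.rpow_pos_of_pos hx0 _
  have hsplit : (x P) ^ (2 - 2/lam) = (x P)^2 * (x P) ^ (-2/lam) := by
    rw [show (2:ℝ) - 2/lam = 2 + (-2/lam) by ring, Real.rpow_add hx0, Real.rpow_two]
  have hc : x P ^ (-2/lam) < lam^2 := by
    rw [hsplit] at hxeq
    nlinarith [pow_pos hx0 2]
  rw [hT P hP]
  exact key hlam hlam2 hc0 hc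
end

section
/- For each λ ∈ (1,2) and each integer k ≥ 2, there exists P < 0 such that T₊(P) + (2k-1)·T₋(P) = 2π. -/
/-!
Writing `α = 2 - 2/λ ∈ (0, 1)`, both periods are values of
`G(c) = ∫₀¹ 2 / √(λ²(1 - s²) + c(1 - s^α))`: `T₊ = G(-x₊^(-2/λ))` with `0 < x₊^(-2/λ) < λ²`,
and `T₋ = G(x₋^(-2/λ))`. Since `s ≤ s^α` and, by Bernoulli, `α(1 - s) ≤ 1 - s^α`, the radicand
lies between `(λ² + α c⁺) s(1 - s)` and `(λ² + c⁺)(1 - s²)`; the arcsine integrates the two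
comparison weights to `π` and `π/2`, so `π/√(λ² + c⁺) ≤ G(c) ≤ 2π/√(λ² + α c⁺)`, and the lower
weight also dominates `G` near every `c > -λ²`, making it continuous. Hence `T₊ ∈ [π/λ, 2π/λ]`,
`T₋ ≥ π/2` where `x₋^(-2/λ) = 4 - λ²`, and `T₋ → 0` as `x₋^(-2/λ) → ∞`. As `2k - 1 ≥ 3` and
`2π/λ + πα = 2π`, the sum `T₊ + (2k - 1)T₋` passes through `2π`; it is continuous in `P` because
`x₊` and `x₋` invert strictly increasing functions.
-/

open Real MeasureTheory Set Filter Topology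

theorem integral_Ioo_eq_sub_of_hasDerivAt_of_nonneg {f f' : ℝ → ℝ} {a b : ℝ} (hab : a ≤ b)
    (hcont : ContinuousOn f (Icc a b)) (hderiv : ∀ x ∈ Ioo a b, HasDerivAt f (f' x) x)
    (hpos : ∀ x ∈ Ioo a b, 0 ≤ f' x) :
    ∫ x in Ioo a b, f' x = f b - f a := by
  rw [← integral_Ioc_eq_integral_Ioo, ← intervalIntegral.integral_of_le hab]
  exact intervalIntegral.integral_eq_sub_of_hasDerivAt_of_le hab hcont hderiv
    ((intervalIntegrable_iff_integrableOn_Ioc_of_le hab).2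
      (intervalIntegral.integrableOn_deriv_of_nonneg hcont hderiv hpos))

theorem hasDerivAt_arcsin_two_mul_sub_one {s : ℝ} (hs : s ∈ Ioo (0 : ℝ) 1) :
    HasDerivAt (fun t => arcsin (2 * t - 1)) (1 / √(s * (1 - s))) s := by
  have h := (hasDerivAt_arcsin (x := 2 * s - 1) (by linarith [hs.1]) (by linarith [hs.2])).comp s
    (((hasDerivAt_id s).const_mul 2).sub_const 1)
  refine h.congr_deriv ?_
  have hsq : 1 - (2 * s - 1) ^ 2 = 2 ^ 2 * (s * (1 - s)) := by ring
  rw [hsq, sqrt_mul (by norm_num), sqrt_sq (by norm_num)]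
  field_simp

theorem integrableOn_one_div_sqrt_mul_one_sub :
    IntegrableOn (fun s => 1 / √(s * (1 - s))) (Ioo 0 1) :=
  (intervalIntegral.integrableOn_deriv_of_nonneg (by fun_prop)
    (fun _ hs => hasDerivAt_arcsin_two_mul_sub_one hs) (fun _ _ => by positivity)).mono_set
    Ioo_subset_Ioc_self

theorem integral_one_div_sqrt_mul_one_sub : ∫ s in Ioo (0 : ℝ) 1, 1 / √(s * (1 - s)) = π := by
  rw [integral_Ioo_eq_sub_of_hasDerivAt_of_nonneg zero_le_one (by fun_prop)
    (fun _ hs => hasDerivAt_arcsin_two_mul_sub_one hs) (fun _ _ => by positivity)]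
  norm_num

theorem integral_one_div_sqrt_one_sub_sq : ∫ s in Ioo (0 : ℝ) 1, 1 / √(1 - s ^ 2) = π / 2 := by
  rw [integral_Ioo_eq_sub_of_hasDerivAt_of_nonneg zero_le_one continuous_arcsin.continuousOn
    (fun _ hs => hasDerivAt_arcsin (by linarith [hs.1]) hs.2.ne) (fun _ _ => by positivity)]
  simp

theorem two_div_sqrt_le_of_mul_le {K w D : ℝ} (hK : 0 < K) (hw : 0 < w) (h : K * w ≤ D) :
    2 / √D ≤ 2 / √K * (1 / √w) := by
  calc 2 / √D ≤ 2 / √(K * w) := by gcongr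
    _ = 2 / √K * (1 / √w) := by rw [sqrt_mul hK.le]; ring

noncomputable def periodRadicand (a α c s : ℝ) : ℝ := a ^ 2 * (1 - s ^ 2) + c * (1 - s ^ α)

noncomputable def periodIntegral (a α c : ℝ) : ℝ :=
  ∫ s in Ioo (0 : ℝ) 1, 2 / √(periodRadicand a α c s)

section periodIntegral

variable {a α c s : ℝ}

theorem mul_le_periodRadicand (hα0 : 0 ≤ α) (hα1 : α ≤ 1) (hc : -a ^ 2 ≤ c)
    (hs : s ∈ Ioo (0 : ℝ) 1) :
    (a ^ 2 + α * max c 0) * (s * (1 - s)) ≤ periodRadicand a α c s := by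
  unfold periodRadicand
  obtain ⟨hs0, hs1⟩ := hs
  have hsα : s ≤ s ^ α := by
    simpa using rpow_le_rpow_of_exponent_ge hs0 hs1.le hα1
  have hbernoulli : α * (1 - s) ≤ 1 - s ^ α := by
    have := rpow_one_add_le_one_add_mul_self (s := s - 1) (by linarith) hα0 hα1
    rw [add_sub_cancel] at this
    linarith
  rcases le_total c 0 with hc0 | hc0
  · rw [max_eq_right hc0]
    nlinarith
  · rw [max_eq_left hc0]
    have h1 : a ^ 2 * (s * (1 - s)) ≤ a ^ 2 * (1 - s ^ 2) := by gcongr; nlinarith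
    have h2 : α * (s * (1 - s)) ≤ 1 - s ^ α :=
      (mul_le_mul_of_nonneg_left (by nlinarith) hα0).trans hbernoulli
    nlinarith [mul_le_mul_of_nonneg_left h2 hc0]

theorem periodRadicand_le_mul (hα0 : 0 ≤ α) (hα1 : α ≤ 1) (hs : s ∈ Ioo (0 : ℝ) 1) :
    periodRadicand a α c s ≤ (a ^ 2 + max c 0) * (1 - s ^ 2) := by
  unfold periodRadicand
  obtain ⟨hs0, hs1⟩ := hs
  have hsα : s ≤ s ^ α := by
    simpa using rpow_le_rpow_of_exponent_ge hs0 hs1.le hα1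
  rcases le_total c 0 with hc0 | hc0
  · rw [max_eq_right hc0]
    nlinarith [rpow_le_one hs0.le hs1.le hα0]
  · rw [max_eq_left hc0]
    nlinarith [mul_le_mul_of_nonneg_left (show 1 - s ^ α ≤ 1 - s ^ 2 by nlinarith) hc0]

theorem periodRadicand_pos (ha : 0 < a) (hα0 : 0 ≤ α) (hα1 : α ≤ 1) (hc : -a ^ 2 ≤ c)
    (hs : s ∈ Ioo (0 : ℝ) 1) : 0 < periodRadicand a α c s :=
  (mul_pos (by positivity) (mul_pos hs.1 (sub_pos.2 hs.2))).trans_le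
    (mul_le_periodRadicand hα0 hα1 hc hs)

theorem two_div_sqrt_periodRadicand_le (ha : 0 < a) (hα0 : 0 ≤ α) (hα1 : α ≤ 1)
    (hc : -a ^ 2 ≤ c) (hs : s ∈ Ioo (0 : ℝ) 1) :
    2 / √(periodRadicand a α c s) ≤ 2 / √(a ^ 2 + α * max c 0) * (1 / √(s * (1 - s))) :=
  two_div_sqrt_le_of_mul_le (by positivity) (mul_pos hs.1 (sub_pos.2 hs.2))
    (mul_le_periodRadicand hα0 hα1 hc hs)

theorem integrableOn_two_div_sqrt_periodRadicand (ha : 0 < a) (hα0 : 0 ≤ α) (hα1 : α ≤ 1)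
    (hc : -a ^ 2 ≤ c) :
    IntegrableOn (fun s => 2 / √(periodRadicand a α c s)) (Ioo 0 1) := by
  refine (integrableOn_one_div_sqrt_mul_one_sub.const_mul (2 / √(a ^ 2 + α * max c 0))).mono'
    (Measurable.aestronglyMeasurable (by unfold periodRadicand; fun_prop)) ?_
  filter_upwards [ae_restrict_mem measurableSet_Ioo] with s hs
  rw [norm_of_nonneg (by positivity)]
  exact two_div_sqrt_periodRadicand_le ha hα0 hα1 hc hs

theorem periodIntegral_le (ha : 0 < a) (hα0 : 0 ≤ α) (hα1 : α ≤ 1) (hc : -a ^ 2 ≤ c) :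
    periodIntegral a α c ≤ 2 * π / √(a ^ 2 + α * max c 0) :=
  calc periodIntegral a α c
      ≤ ∫ s in Ioo (0 : ℝ) 1, 2 / √(a ^ 2 + α * max c 0) * (1 / √(s * (1 - s))) := by
        refine integral_mono_of_nonneg (ae_of_all _ fun s => by positivity)
          (integrableOn_one_div_sqrt_mul_one_sub.const_mul _) ?_
        filter_upwards [ae_restrict_mem measurableSet_Ioo] with s hs
        exact two_div_sqrt_periodRadicand_le ha hα0 hα1 hc hs
    _ = 2 * π / √(a ^ 2 + α * max c 0) := by
        rw [integral_const_mul, integral_one_div_sqrt_mul_one_sub]; ring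

theorem div_sqrt_le_periodIntegral (ha : 0 < a) (hα0 : 0 ≤ α) (hα1 : α ≤ 1)
    (hc : -a ^ 2 ≤ c) :
    π / √(a ^ 2 + max c 0) ≤ periodIntegral a α c :=
  calc π / √(a ^ 2 + max c 0)
      = ∫ s in Ioo (0 : ℝ) 1, 2 / √(a ^ 2 + max c 0) * (1 / √(1 - s ^ 2)) := by
        rw [integral_const_mul, integral_one_div_sqrt_one_sub_sq]; ring
    _ ≤ periodIntegral a α c := by
        refine integral_mono_of_nonneg (ae_of_all _ fun s => by positivity)
          (integrableOn_two_div_sqrt_periodRadicand ha hα0 hα1 hc) ?_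
        filter_upwards [ae_restrict_mem measurableSet_Ioo] with s hs
        have hs2 : 0 < 1 - s ^ 2 := by nlinarith [hs.1, hs.2]
        have hD := periodRadicand_pos ha hα0 hα1 hc hs
        calc 2 / √(a ^ 2 + max c 0) * (1 / √(1 - s ^ 2))
            = 2 / √((a ^ 2 + max c 0) * (1 - s ^ 2)) := by
              rw [sqrt_mul (by positivity)]; ring
          _ ≤ 2 / √(periodRadicand a α c s) := by
              gcongr; exact periodRadicand_le_mul hα0 hα1 hs

theorem continuousOn_periodIntegral (ha : 0 < a) (hα0 : 0 ≤ α) (hα1 : α ≤ 1) :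
    ContinuousOn (periodIntegral a α) (Ioi (-a ^ 2)) := by
  intro c₀ hc₀
  refine (continuousAt_of_dominated (bound := fun s => 2 / √(a ^ 2) * (1 / √(s * (1 - s))))
    ?_ ?_ (integrableOn_one_div_sqrt_mul_one_sub.const_mul _) ?_).continuousWithinAt
  · exact Eventually.of_forall fun c =>
      Measurable.aestronglyMeasurable (by unfold periodRadicand; fun_prop)
  · filter_upwards [Ioi_mem_nhds hc₀] with c hc
    filter_upwards [ae_restrict_mem measurableSet_Ioo] with s hs
    rw [norm_of_nonneg (by positivity)]
    have hw : 0 < s * (1 - s) := mul_pos hs.1 (sub_pos.2 hs.2)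
    exact two_div_sqrt_le_of_mul_le (by positivity) hw
      ((mul_le_mul_of_nonneg_right (le_add_of_nonneg_right (by positivity)) hw.le).trans
        (mul_le_periodRadicand hα0 hα1 hc.le hs))
  · filter_upwards [ae_restrict_mem measurableSet_Ioo] with s hs
    have hD := periodRadicand_pos ha hα0 hα1 (le_of_lt hc₀) hs
    exact continuousAt_const.div (by unfold periodRadicand; fun_prop) (sqrt_pos.2 hD).ne'

theorem periodIntegral_mem_Icc_of_nonpos (ha : 0 < a) (hα0 : 0 ≤ α) (hα1 : α ≤ 1)
    (hc : -a ^ 2 ≤ c) (hc0 : c ≤ 0) : periodIntegral a α c ∈ Icc (π / a) (2 * π / a) := by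
  have hlower := div_sqrt_le_periodIntegral ha hα0 hα1 hc
  have hupper := periodIntegral_le ha hα0 hα1 hc
  simp only [max_eq_right hc0, mul_zero, add_zero, sqrt_sq ha.le] at hlower hupper
  exact ⟨hlower, hupper⟩

theorem div_two_le_periodIntegral_four_sub_sq (ha : 0 < a) (ha2 : a ≤ 2) (hα0 : 0 ≤ α)
    (hα1 : α ≤ 1) : π / 2 ≤ periodIntegral a α (4 - a ^ 2) := by
  have h := div_sqrt_le_periodIntegral ha hα0 hα1 (c := 4 - a ^ 2) (by linarith)
  rwa [max_eq_left (by nlinarith), add_sub_cancel,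
    show √(4 : ℝ) = 2 by rw [show (4 : ℝ) = 2 ^ 2 by norm_num, sqrt_sq zero_le_two]] at h

theorem tendsto_periodIntegral_atTop (ha : 0 < a) (hα0 : 0 < α) (hα1 : α ≤ 1) :
    Tendsto (periodIntegral a α) atTop (𝓝 0) := by
  have hbound : Tendsto (fun c => 2 * π / √(a ^ 2 + α * c)) atTop (𝓝 0) :=
    (tendsto_sqrt_atTop.comp (tendsto_atTop_add_const_left _ _
      (tendsto_id.const_mul_atTop hα0))).const_div_atTop _
  refine tendsto_of_tendsto_of_tendsto_of_le_of_le' tendsto_const_nhds hbound ?_ ?_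
  · filter_upwards [eventually_ge_atTop 0] with c hc
    exact (by positivity : (0 : ℝ) ≤ π / √(a ^ 2 + max c 0)).trans
      (div_sqrt_le_periodIntegral ha hα0.le hα1 (by linarith [sq_nonneg a]))
  · filter_upwards [eventually_ge_atTop 0] with c hc
    simpa only [max_eq_left hc] using
      periodIntegral_le ha hα0.le hα1 (by linarith [sq_nonneg a] : -a ^ 2 ≤ c)

end periodIntegral

theorem StrictMonoOn.tendsto_of_tendsto_comp {α β γ : Type*} [LinearOrder α]
    [TopologicalSpace α] [OrderTopology α] [DenselyOrdered α] [Preorder β] [TopologicalSpace β]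
    [OrderTopology β] {f : α → β} {S : Set α} {a : α} (hf : StrictMonoOn f S) (hS : S ∈ 𝓝 a)
    {x : γ → α} {l : Filter γ} (hxS : ∀ᶠ p in l, x p ∈ S)
    (hfx : Tendsto (fun p => f (x p)) l (𝓝 (f a))) : Tendsto x l (𝓝 a) := by
  have ha : a ∈ S := mem_of_mem_nhds hS
  refine tendsto_order.2 ⟨fun a' ha' => ?_, fun a' ha' => ?_⟩
  · obtain ⟨l', hl', hsub⟩ := exists_Ioc_subset_of_mem_nhds' hS ha'
    obtain ⟨b, hl'b, hba⟩ := exists_between hl'.2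
    have hb : b ∈ S := hsub ⟨hl'b, hba.le⟩
    filter_upwards [hxS, (tendsto_order.1 hfx).1 _ (hf hb ha hba)] with p hp hfp
    exact hl'.1.trans_lt (hl'b.trans ((hf.lt_iff_lt hb hp).1 hfp))
  · obtain ⟨u', hu', hsub⟩ := exists_Ico_subset_of_mem_nhds' hS ha'
    obtain ⟨b, hab, hbu'⟩ := exists_between hu'.1
    have hb : b ∈ S := hsub ⟨hab.le, hbu'⟩
    filter_upwards [hxS, (tendsto_order.1 hfx).2 _ (hf ha hb hab)] with p hp hfp
    exact (((hf.lt_iff_lt hp hb).1 hfp).trans hbu').trans_le hu'.2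

theorem StrictMonoOn.continuousOn_of_comp_eq {α β γ : Type*} [LinearOrder α]
    [TopologicalSpace α] [OrderTopology α] [DenselyOrdered α] [Preorder β] [TopologicalSpace β]
    [OrderTopology β] [TopologicalSpace γ] {f : α → β} {S : Set α} (hf : StrictMonoOn f S)
    (hS : IsOpen S) {x : γ → α} {g : γ → β} {U : Set γ} (hg : ContinuousOn g U)
    (hxS : MapsTo x U S) (hfx : EqOn (fun p => f (x p)) g U) : ContinuousOn x U := fun p hp =>
  hf.tendsto_of_tendsto_comp (hS.mem_nhds (hxS hp)) (eventually_nhdsWithin_of_forall hxS)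
    ((hg p hp).congr (fun _ hy => hfx hy) (hfx hp))

theorem rpow_two_sub {x : ℝ} (hx : 0 < x) (q : ℝ) : x ^ (2 - q) = x ^ 2 * x ^ (-q) := by
  rw [sub_eq_add_neg, rpow_add hx, rpow_two]

theorem strictMonoOn_mul_sq_add_rpow {b p : ℝ} (hb : 0 ≤ b) (hp : 0 < p) :
    StrictMonoOn (fun x => b * x ^ 2 + x ^ p) (Ioi 0) := fun x hx y _ hxy => by
  have : b * x ^ 2 ≤ b * y ^ 2 := by gcongr; exact le_of_lt hx
  have := rpow_lt_rpow (le_of_lt hx) hxy hp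
  dsimp only
  linarith

theorem strictMonoOn_mul_sq_sub_rpow {b q : ℝ} (hq : 0 ≤ q) :
    StrictMonoOn (fun x => b * x ^ 2 - x ^ (2 - q)) {x | 0 < x ∧ x ^ (-q) < b} :=
  fun x hx y _ hxy => by
  have hy0 : 0 < y := hx.1.trans hxy
  have hanti : y ^ (-q) ≤ x ^ (-q) := rpow_le_rpow_of_nonpos hx.1 hxy.le (neg_nonpos.2 hq)
  have hsq : x ^ 2 < y ^ 2 := by gcongr; exact hx.1.le
  simp only [rpow_two_sub hx.1, rpow_two_sub hy0]
  nlinarith [sub_pos.2 hx.2]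

theorem isOpen_setOf_pos_and_rpow_lt (q b : ℝ) : IsOpen {x : ℝ | 0 < x ∧ x ^ q < b} :=
  (continuousOn_id.rpow_const fun _ hx => Or.inl (ne_of_gt hx)).isOpen_inter_preimage
    isOpen_Ioi isOpen_Iio

theorem rpow_neg_lt_of_mul_sq_sub_rpow_pos {b q x : ℝ} (hx : 0 < x)
    (h : 0 < b * x ^ 2 - x ^ (2 - q)) : x ^ (-q) < b := by
  rw [rpow_two_sub hx] at h
  have h' : 0 < x ^ 2 * (b - x ^ (-q)) := by linarith
  exact sub_pos.1 (pos_of_mul_pos_right h' (by positivity))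

section RootFunctions

variable {b : ℝ} {x : ℝ → ℝ}

theorem continuousOn_Iio_of_mul_sq_add_rpow_eq {p : ℝ} (hb : 0 ≤ b) (hp : 0 < p)
    (hx : ∀ P < (0 : ℝ), 0 < x P ∧ b * x P ^ 2 + x P ^ p = -2 * P) :
    ContinuousOn x (Iio 0) :=
  (strictMonoOn_mul_sq_add_rpow hb hp).continuousOn_of_comp_eq isOpen_Ioi (by fun_prop)
    (fun P hP => (hx P hP).1) (fun P hP => (hx P hP).2)

theorem surjOn_rpow_of_mul_sq_add_rpow_eq {p r : ℝ} (hb : 0 ≤ b) (hp : 0 < p) (hr : r ≠ 0)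
    (hx : ∀ P < (0 : ℝ), 0 < x P ∧ b * x P ^ 2 + x P ^ p = -2 * P) :
    SurjOn (fun P => x P ^ r) (Iio 0) (Ioi 0) := by
  intro c hc
  have ht : 0 < c ^ r⁻¹ := rpow_pos_of_pos hc _
  have hP : -(b * (c ^ r⁻¹) ^ 2 + (c ^ r⁻¹) ^ p) / 2 < 0 := by
    have := rpow_pos_of_pos ht p
    have : 0 ≤ b * (c ^ r⁻¹) ^ 2 := by positivity
    linarith
  refine ⟨_, hP, ?_⟩
  obtain ⟨hx0, hxeq⟩ := hx _ hP
  have hxt : x (-(b * (c ^ r⁻¹) ^ 2 + (c ^ r⁻¹) ^ p) / 2) = c ^ r⁻¹ :=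
    (strictMonoOn_mul_sq_add_rpow hb hp).injOn hx0 ht (by rw [hxeq]; ring)
  simp only [hxt, rpow_inv_rpow (le_of_lt hc) hr]

theorem mapsTo_of_mul_sq_sub_rpow_eq {q : ℝ}
    (hx : ∀ P < (0 : ℝ), 0 < x P ∧ b * x P ^ 2 - x P ^ (2 - q) = -2 * P) :
    MapsTo x (Iio 0) {y | 0 < y ∧ y ^ (-q) < b} := fun P hP =>
  ⟨(hx P hP).1, rpow_neg_lt_of_mul_sq_sub_rpow_pos (hx P hP).1
    (by rw [(hx P hP).2]; linarith [mem_Iio.1 hP])⟩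

theorem continuousOn_Iio_of_mul_sq_sub_rpow_eq {q : ℝ} (hq : 0 ≤ q)
    (hx : ∀ P < (0 : ℝ), 0 < x P ∧ b * x P ^ 2 - x P ^ (2 - q) = -2 * P) :
    ContinuousOn x (Iio 0) :=
  (strictMonoOn_mul_sq_sub_rpow hq).continuousOn_of_comp_eq (isOpen_setOf_pos_and_rpow_lt _ _)
    (by fun_prop) (mapsTo_of_mul_sq_sub_rpow_eq hx) (fun P hP => (hx P hP).2)

end RootFunctions

theorem exists_periodIntegral_add_mul_periodIntegral_eq {lam K : ℝ} {cp cm : ℝ → ℝ}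
    (hlam : 1 < lam) (hlam2 : lam < 2) (hK : 3 ≤ K) (hcp_cont : ContinuousOn cp (Iio 0))
    (hcm_cont : ContinuousOn cm (Iio 0)) (hcp : MapsTo cp (Iio 0) (Ioo (-lam ^ 2) 0))
    (hcm : MapsTo cm (Iio 0) (Ioi 0)) (hcm_surj : SurjOn cm (Iio 0) (Ioi 0)) :
    ∃ P < 0, periodIntegral lam (2 - 2 / lam) (cp P)
      + K * periodIntegral lam (2 - 2 / lam) (cm P) = 2 * π := by
  have hlam0 : 0 < lam := by linarith
  have hα0 : 0 < 2 - 2 / lam := by rw [sub_pos, div_lt_iff₀ hlam0]; linarith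
  have hα1 : 2 - 2 / lam ≤ 1 := by rw [sub_le_comm, le_div_iff₀ hlam0]; linarith
  have hG := continuousOn_periodIntegral hlam0 hα0.le hα1
  have hcont : ContinuousOn (fun P => periodIntegral lam (2 - 2 / lam) (cp P)
      + K * periodIntegral lam (2 - 2 / lam) (cm P)) (Iio 0) :=
    (hG.comp hcp_cont fun P hP => (hcp hP).1).add <| (hG.comp hcm_cont fun P hP =>
      (neg_neg_of_pos (pow_pos hlam0 2)).trans (hcm hP)).const_mul K
  obtain ⟨P₁, hP₁, hcm₁⟩ := hcm_surj (show 0 < 4 - lam ^ 2 by nlinarith)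
  obtain ⟨C, hC, hC0⟩ := (((tendsto_periodIntegral_atTop hlam0 hα0 hα1).eventually
    (ge_mem_nhds (show 0 < π * (2 - 2 / lam) / K by positivity))).and
    (eventually_gt_atTop 0)).exists
  obtain ⟨P₂, hP₂, hcm₂⟩ := hcm_surj hC0
  have hlow : 2 * π ≤ periodIntegral lam (2 - 2 / lam) (cp P₁)
      + K * periodIntegral lam (2 - 2 / lam) (cm P₁) := by
    have hTp := (periodIntegral_mem_Icc_of_nonpos hlam0 hα0.le hα1 (hcp hP₁).1.le
      (hcp hP₁).2.le).1
    have hTm := div_two_le_periodIntegral_four_sub_sq hlam0 hlam2.le hα0.le hα1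
    rw [← hcm₁] at hTm
    have : π / 2 ≤ π / lam := div_le_div_of_nonneg_left pi_pos.le hlam0 hlam2.le
    nlinarith [pi_pos]
  have hup : periodIntegral lam (2 - 2 / lam) (cp P₂)
      + K * periodIntegral lam (2 - 2 / lam) (cm P₂) ≤ 2 * π := by
    have hTp := (periodIntegral_mem_Icc_of_nonpos hlam0 hα0.le hα1 (hcp hP₂).1.le
      (hcp hP₂).2.le).2
    rw [← hcm₂, le_div_iff₀ (by positivity)] at hC
    have : 2 * π / lam + π * (2 - 2 / lam) = 2 * π := by ring
    linarith
  obtain ⟨P, hP, hPeq⟩ := isPreconnected_Iio.intermediate_value hP₂ hP₁ hcont ⟨hup, hlow⟩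
  exact ⟨P, hP, hPeq⟩

/-- For λ ∈ (1,2) and each integer k ≥ 2, there exists P < 0 with
`T₊(P) + (2k-1) T₋(P) = 2π`. -/
theorem stmt_15 (lam : ℝ) (hlam : 1 < lam) (hlam2 : lam < 2)
    (xp xm Tp Tm : ℝ → ℝ)
    (hxp : ∀ P < (0 : ℝ), 0 < xp P ∧
      lam ^ 2 * (xp P) ^ 2 - (xp P) ^ (2 - 2 / lam) = -2 * P)
    (hxm : ∀ P < (0 : ℝ), 0 < xm P ∧
      lam ^ 2 * (xm P) ^ 2 + (xm P) ^ (2 - 2 / lam) = -2 * P)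
    (hTp : ∀ P < (0 : ℝ), Tp P = ∫ s in Set.Ioo (0:ℝ) 1,
      2 / Real.sqrt (lam ^ 2 * (1 - s ^ 2)
        - (xp P) ^ (-2 / lam) * (1 - s ^ (2 - 2 / lam))))
    (hTm : ∀ P < (0 : ℝ), Tm P = ∫ s in Set.Ioo (0:ℝ) 1,
      2 / Real.sqrt (lam ^ 2 * (1 - s ^ 2)
        + (xm P) ^ (-2 / lam) * (1 - s ^ (2 - 2 / lam))))
    (k : ℕ) (hk : 2 ≤ k) :
    ∃ P < (0 : ℝ), Tp P + (2 * (k : ℝ) - 1) * Tm P = 2 * π := by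
  have hlam0 : 0 < lam := by linarith
  have hK : 3 ≤ 2 * (k : ℝ) - 1 := by
    have : (2 : ℝ) ≤ k := by exact_mod_cast hk
    linarith
  have hxp_cont := (continuousOn_Iio_of_mul_sq_sub_rpow_eq (by positivity) hxp).rpow_const
    (p := -2 / lam) fun P hP => Or.inl (hxp P hP).1.ne'
  have hxm_cont := (continuousOn_Iio_of_mul_sq_add_rpow_eq (sq_nonneg lam)
    (by rw [sub_pos, div_lt_iff₀ hlam0]; linarith) hxm).rpow_const
    (p := -2 / lam) fun P hP => Or.inl (hxm P hP).1.ne'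
  obtain ⟨P, hP, hPeq⟩ := exists_periodIntegral_add_mul_periodIntegral_eq
    (cp := fun P => -(xp P ^ (-2 / lam))) hlam hlam2 hK hxp_cont.neg hxm_cont
    (fun P hP => by
      have hmem := mapsTo_of_mul_sq_sub_rpow_eq hxp hP
      rw [← neg_div] at hmem
      exact ⟨neg_lt_neg hmem.2, neg_neg_of_pos (rpow_pos_of_pos hmem.1 _)⟩)
    (fun P hP => rpow_pos_of_pos (hxm P hP).1 _)
    (surjOn_rpow_of_mul_sq_add_rpow_eq (sq_nonneg lam)
      (by rw [sub_pos, div_lt_iff₀ hlam0]; linarith) (by positivity) hxm)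
  refine ⟨P, hP, ?_⟩
  rw [hTp P hP, hTm P hP]
  simpa only [periodIntegral, periodRadicand, neg_mul, ← sub_eq_add_neg] using hPeq
end
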